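/- Convergence of the tail sum ∑_{k=N}^∞ (A_k^{α+1})^{−1}: for α > −1 and A_k^{α+1} = binom(k+α+1,k), the series ∑_{k=N}^∞ 1/A_k^{α+1} converges and is bounded above by C(N+1)^{−α} for a constant C depending only on α, provided α > 0. -/

import Mathlib

/-!
The reciprocals telescope: with `T k = Γ(α+2)/α · Γ(k+1)/Γ(k+α+1)` one has
`1 / A_k^{α+1} = T k - T (k+1)`, so for `α > 0` the tail from `N` is at most `T N`.
Log-convexity of `Γ` gives `Γ(N+1)/Γ(N+α+1) ≤ (1+α)(N+1)^(-α)`, which bounds `T N`.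
-/

open Real

/-- The generalized binomial coefficient `A_k^{α+1} = Γ(k+α+2)/(Γ(k+1)Γ(α+2))`. -/
noncomputable def binomA (α : ℝ) (k : ℕ) : ℝ :=
  Real.Gamma ((k : ℝ) + α + 2) / (Real.Gamma ((k : ℝ) + 1) * Real.Gamma (α + 2))

namespace Real

lemma rpow_mul_Gamma_le_Gamma_add {n : ℕ} (hn : 2 ≤ n) {a : ℝ} (ha : 0 < a) :
    ((n : ℝ) - 1) ^ a * Gamma n ≤ Gamma (n + a) := by
  have hn1 : (0 : ℝ) < n - 1 := by
    have : (2 : ℝ) ≤ n := by exact_mod_cast hn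
    linarith
  have hfeq : ∀ {y : ℝ}, 0 < y → (log ∘ Gamma) (y + 1) = (log ∘ Gamma) y + log y := fun hy => by
    simp only [Function.comp_apply]
    rw [Gamma_add_one hy.ne', log_mul hy.ne' (Gamma_pos_of_pos hy).ne', add_comm]
  have hlog := BohrMollerup.f_add_nat_ge convexOn_log_Gamma hfeq hn ha
  simp only [Function.comp_apply] at hlog
  rw [← exp_le_exp, exp_add, exp_log (Gamma_pos_of_pos (by linarith)),
    exp_log (Gamma_pos_of_pos (by linarith)), mul_comm a, ← rpow_def_of_pos hn1] at hlog
  linarith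

lemma Gamma_nat_add_one_div_le {a : ℝ} (ha : 0 < a) (N : ℕ) :
    Gamma ((N : ℝ) + 1) / Gamma ((N : ℝ) + a + 1) ≤ (1 + a) * ((N : ℝ) + 1) ^ (-a) := by
  have hN : (0 : ℝ) < N + 1 := by positivity
  have hG : 0 < Gamma ((N : ℝ) + a + 1) := Gamma_pos_of_pos (by positivity)
  have hGN2 : Gamma ((N : ℝ) + 2) = (N + 1) * Gamma ((N : ℝ) + 1) := by
    rw [show (N : ℝ) + 2 = (N + 1) + 1 by ring, Gamma_add_one hN.ne']
  have hGNa2 : Gamma ((N : ℝ) + 2 + a) = (N + a + 1) * Gamma ((N : ℝ) + a + 1) := by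
    rw [show (N : ℝ) + 2 + a = (N + a + 1) + 1 by ring, Gamma_add_one (by positivity)]
  have hlogconv := rpow_mul_Gamma_le_Gamma_add (n := N + 2) (by omega) ha
  push_cast at hlogconv
  rw [show (N : ℝ) + 2 - 1 = N + 1 by ring, hGN2, hGNa2] at hlogconv
  have key : (N + 1) * (Gamma ((N : ℝ) + 1) * (N + 1) ^ a) ≤
      (N + 1) * ((1 + a) * Gamma ((N : ℝ) + a + 1)) :=
    calc (N + 1) * (Gamma ((N : ℝ) + 1) * (N + 1) ^ a)
        = ((N : ℝ) + 1) ^ a * ((N + 1) * Gamma ((N : ℝ) + 1)) := by ring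
      _ ≤ (N + a + 1) * Gamma ((N : ℝ) + a + 1) := hlogconv
      _ ≤ (1 + a) * (N + 1) * Gamma ((N : ℝ) + a + 1) := by
        gcongr
        nlinarith [(N.cast_nonneg : (0 : ℝ) ≤ N)]
      _ = (N + 1) * ((1 + a) * Gamma ((N : ℝ) + a + 1)) := by ring
  rw [rpow_neg hN.le, ← div_eq_mul_inv, div_le_div_iff₀ hG (by positivity)]
  exact le_of_mul_le_mul_left key hN

end Real

lemma binomA_pos {α : ℝ} (hα : -1 < α) (k : ℕ) : 0 < binomA α k := by
  have hk : (0 : ℝ) ≤ k := k.cast_nonneg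
  exact div_pos (Gamma_pos_of_pos (by linarith))
    (mul_pos (Gamma_pos_of_pos (by positivity)) (Gamma_pos_of_pos (by linarith)))

noncomputable def binomAInvTail (α : ℝ) (k : ℕ) : ℝ :=
  Gamma (α + 2) / α * (Gamma ((k : ℝ) + 1) / Gamma ((k : ℝ) + α + 1))

lemma inv_binomA_eq_sub {α : ℝ} (hα : -1 < α) (hα0 : α ≠ 0) (k : ℕ) :
    (binomA α k)⁻¹ = binomAInvTail α k - binomAInvTail α (k + 1) := by
  have hk : (0 : ℝ) < k + 1 := by positivity
  have hkα : (0 : ℝ) < k + α + 1 := by linarith [k.cast_nonneg (α := ℝ)]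
  have hG1 := (Gamma_pos_of_pos hk).ne'
  have hG2 := (Gamma_pos_of_pos hkα).ne'
  have hG3 := (Gamma_pos_of_pos (show 0 < α + 2 by linarith)).ne'
  unfold binomA binomAInvTail
  push_cast
  rw [show (k : ℝ) + 1 + 1 = (k + 1) + 1 by ring, Gamma_add_one hk.ne',
    show (k : ℝ) + 1 + α + 1 = (k + α + 1) + 1 by ring, Gamma_add_one hkα.ne',
    show (k : ℝ) + α + 2 = (k + α + 1) + 1 by ring, Gamma_add_one hkα.ne']
  field_simp
  ring

lemma sum_range_inv_binomA {α : ℝ} (hα : -1 < α) (hα0 : α ≠ 0) (N n : ℕ) :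
    ∑ k ∈ Finset.range n, (binomA α (k + N))⁻¹ =
      binomAInvTail α N - binomAInvTail α (n + N) := by
  have := Finset.sum_range_sub' (fun k => binomAInvTail α (k + N)) n
  simp only [zero_add, add_right_comm _ 1 N] at this
  rw [← this]
  exact Finset.sum_congr rfl fun k _ => inv_binomA_eq_sub hα hα0 (k + N)

lemma binomAInvTail_pos {α : ℝ} (hα : 0 < α) (k : ℕ) : 0 < binomAInvTail α k :=
  mul_pos (div_pos (Gamma_pos_of_pos (by positivity)) hα)
    (div_pos (Gamma_pos_of_pos (by positivity)) (Gamma_pos_of_pos (by positivity)))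

lemma binomAInvTail_le {α : ℝ} (hα : 0 < α) (N : ℕ) :
    binomAInvTail α N ≤ Gamma (α + 2) / α * (1 + α) * ((N : ℝ) + 1) ^ (-α) := by
  rw [mul_assoc]
  exact mul_le_mul_of_nonneg_left (Gamma_nat_add_one_div_le hα N)
    (div_pos (Gamma_pos_of_pos (by positivity)) hα).le

theorem tail_sum_binomA (α : ℝ) (hα : 0 < α) :
    ∃ C : ℝ, 0 < C ∧ ∀ N : ℕ,
      (Summable fun k : ℕ => (binomA α (k + N))⁻¹) ∧
        ∑' k : ℕ, (binomA α (k + N))⁻¹ ≤ C * ((N : ℝ) + 1) ^ (-α) := by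
  refine ⟨Gamma (α + 2) / α * (1 + α),
    mul_pos (div_pos (Gamma_pos_of_pos (by positivity)) hα) (by positivity), fun N => ?_⟩
  have hnonneg : ∀ k, 0 ≤ (binomA α (k + N))⁻¹ :=
    fun k => (inv_pos.2 (binomA_pos (by linarith) (k + N))).le
  have hpartial : ∀ n, ∑ k ∈ Finset.range n, (binomA α (k + N))⁻¹ ≤ binomAInvTail α N := by
    intro n
    rw [sum_range_inv_binomA (by linarith) hα.ne']
    linarith [binomAInvTail_pos hα (n + N)]
  exact ⟨summable_of_sum_range_le hnonneg hpartial,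
    (tsum_le_of_sum_range_le hnonneg hpartial).trans (binomAInvTail_le hα N)⟩
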